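/- Let β ≥ 0, let W be a real n×m matrix, let G : ℝ^n → ℝ be a convex function, and let C ⊆ ℝ^n be a nonempty closed convex set. For x ∈ ℝ^m define F_x(z) = (1/2)‖z − Wx‖² + (β/2)‖Wᵀz − x‖² + G(z). If z₁ minimizes F_{x₁} over C and z₂ minimizes F_{x₂} over C, then (1+β)·⟨x₁ − x₂, Wᵀ(z₁ − z₂)⟩ ≥ ‖z₁ − z₂‖² + β·‖Wᵀ(z₁ − z₂)‖², where ⟨·,·⟩ is the Euclidean inner product. -/

import Mathlib

open Matrix Set Filter Topology
open scoped RealInnerProductSpace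

/-!
The objective `F_x` is the convex function `G` plus the quadratic
`z ↦ ½‖z - Wx‖² + (β/2)‖Wᵀz - x‖²`, whose restriction to every segment `[z₁, z₂]` has
curvature `‖z₁ - z₂‖² + β‖Wᵀ(z₁ - z₂)‖²`. Comparing a minimizer `z₁` with the points of the
segment towards `z₂ ∈ C` and letting them tend to `z₁` gives
`F_{x₁}(z₁) + ½(‖z₁ - z₂‖² + β‖Wᵀ(z₁ - z₂)‖²) ≤ F_{x₁}(z₂)`. Adding this to the same
inequality with the roles of `1` and `2` exchanged, the norms of the data cancel and only the
cross terms `⟪z₁ - z₂, W(x₁ - x₂)⟫ = ⟪Wᵀ(z₁ - z₂), x₁ - x₂⟫` remain.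
-/

theorem IsMinOn.add_le_of_convexComb_le {E : Type*} [AddCommGroup E] [Module ℝ E]
    {C : Set E} {f : E → ℝ} {x y : E} {c : ℝ} (hC : Convex ℝ C) (hmin : IsMinOn f C x)
    (hx : x ∈ C) (hy : y ∈ C)
    (hf : ∀ t ∈ Ioo (0 : ℝ) 1,
      f ((1 - t) • x + t • y) ≤ (1 - t) * f x + t * f y - t * (1 - t) * c) :
    f x + c ≤ f y := by
  have hslope : ∀ t ∈ Ioo (0 : ℝ) 1, (1 - t) * c ≤ f y - f x := by
    intro t ht
    have hseg : f x ≤ f ((1 - t) • x + t • y) :=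
      isMinOn_iff.1 hmin _ (hC hx hy (by linarith [ht.2]) ht.1.le (by ring))
    have : t * ((1 - t) * c) ≤ t * (f y - f x) := by linarith [hf t ht]
    exact le_of_mul_le_mul_left this ht.1
  have hlim : Tendsto (fun t : ℝ ↦ (1 - t) * c) (𝓝[>] 0) (𝓝 c) := by
    have : Continuous fun t : ℝ ↦ (1 - t) * c := by fun_prop
    simpa using (this.tendsto 0).mono_left nhdsWithin_le_nhds
  have := le_of_tendsto hlim (eventually_of_mem (Ioo_mem_nhdsGT one_pos) hslope)
  linarith

section ProxObjective

variable {E F : Type*} [NormedAddCommGroup E] [InnerProductSpace ℝ E]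
  [NormedAddCommGroup F] [InnerProductSpace ℝ F]

theorem norm_convexComb_sub_sq (a x y : E) (t : ℝ) :
    ‖(1 - t) • x + t • y - a‖ ^ 2
      = (1 - t) * ‖x - a‖ ^ 2 + t * ‖y - a‖ ^ 2 - t * (1 - t) * ‖x - y‖ ^ 2 := by
  have hx : (1 - t) • x + t • y - a = x - a + t • (y - x) := by module
  have hxy : x - y = -(y - x) := by abel
  have hy : y - a = x - a + (y - x) := by abel
  rw [hx, hxy, hy, norm_neg, norm_add_sq_real, norm_add_sq_real, norm_smul, inner_smul_right,
    Real.norm_eq_abs, mul_pow, sq_abs]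
  ring

theorem LinearMap.norm_map_convexComb_sub_sq (T : E →ₗ[ℝ] F) (b : F) (x y : E) (t : ℝ) :
    ‖T ((1 - t) • x + t • y) - b‖ ^ 2
      = (1 - t) * ‖T x - b‖ ^ 2 + t * ‖T y - b‖ ^ 2 - t * (1 - t) * ‖T (x - y)‖ ^ 2 := by
  rw [map_add, map_smul, map_smul, norm_convexComb_sub_sq, map_sub]

theorem two_mul_inner_sub_sub_eq_norm_sub_sq (u v a b : E) :
    2 * ⟪u - v, a - b⟫ = ‖v - a‖ ^ 2 - ‖u - a‖ ^ 2 + ‖u - b‖ ^ 2 - ‖v - b‖ ^ 2 := by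
  simp only [norm_sub_sq_real, inner_sub_left, inner_sub_right]
  ring

/-- The objective `F_x` of the paper, with `T = Wᵀ`, `a = W x` and `b = x`. -/
noncomputable def proxObjective (T : E →ₗ[ℝ] F) (β : ℝ) (G : E → ℝ) (a : E) (b : F) (z : E) : ℝ :=
  (1/2) * ‖z - a‖ ^ 2 + (β/2) * ‖T z - b‖ ^ 2 + G z

variable {T : E →ₗ[ℝ] F} {β : ℝ} {G : E → ℝ}

theorem proxObjective_convexComb_le (hG : ConvexOn ℝ univ G) (a : E) (b : F) (x y : E)
    {t : ℝ} (ht₀ : 0 ≤ t) (ht₁ : t ≤ 1) :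
    proxObjective T β G a b ((1 - t) • x + t • y)
      ≤ (1 - t) * proxObjective T β G a b x + t * proxObjective T β G a b y
        - t * (1 - t) * ((‖x - y‖ ^ 2 + β * ‖T (x - y)‖ ^ 2) / 2) := by
  have hGseg : G ((1 - t) • x + t • y) ≤ (1 - t) * G x + t * G y :=
    hG.2 (mem_univ x) (mem_univ y) (by linarith) ht₀ (by ring)
  simp only [proxObjective, norm_convexComb_sub_sq, T.norm_map_convexComb_sub_sq]
  linear_combination hGseg

theorem proxObjective_add_le_of_isMinOn (hG : ConvexOn ℝ univ G) {C : Set E}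
    (hC : Convex ℝ C) {a : E} {b : F} {x y : E}
    (hmin : IsMinOn (proxObjective T β G a b) C x) (hx : x ∈ C) (hy : y ∈ C) :
    proxObjective T β G a b x + (‖x - y‖ ^ 2 + β * ‖T (x - y)‖ ^ 2) / 2
      ≤ proxObjective T β G a b y :=
  hmin.add_le_of_convexComb_le hC hx hy fun _ ht ↦
    proxObjective_convexComb_le hG a b x y ht.1.le ht.2.le

theorem proxObjective_isMinOn_monotone (hG : ConvexOn ℝ univ G) {C : Set E}
    (hC : Convex ℝ C) {a₁ a₂ : E} {b₁ b₂ : F} {z₁ z₂ : E}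
    (hmin₁ : IsMinOn (proxObjective T β G a₁ b₁) C z₁) (hz₁ : z₁ ∈ C)
    (hmin₂ : IsMinOn (proxObjective T β G a₂ b₂) C z₂) (hz₂ : z₂ ∈ C) :
    ‖z₁ - z₂‖ ^ 2 + β * ‖T (z₁ - z₂)‖ ^ 2
      ≤ ⟪z₁ - z₂, a₁ - a₂⟫ + β * ⟪T (z₁ - z₂), b₁ - b₂⟫ := by
  have h₁ := proxObjective_add_le_of_isMinOn hG hC hmin₁ hz₁ hz₂
  have h₂ := proxObjective_add_le_of_isMinOn hG hC hmin₂ hz₂ hz₁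
  rw [← neg_sub z₁ z₂, map_neg, norm_neg, norm_neg] at h₂
  have hE := two_mul_inner_sub_sub_eq_norm_sub_sq z₁ z₂ a₁ a₂
  have hF := two_mul_inner_sub_sub_eq_norm_sub_sq (T z₁) (T z₂) b₁ b₂
  rw [← map_sub] at hF
  simp only [proxObjective] at h₁ h₂
  linear_combination h₁ + h₂ - hE / 2 - β * hF / 2

end ProxObjective

theorem Matrix.inner_toEuclideanLin_transpose {n m : Type*} [Fintype n] [Fintype m]
    [DecidableEq n] [DecidableEq m] (W : Matrix n m ℝ) (z : EuclideanSpace ℝ n)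
    (x : EuclideanSpace ℝ m) :
    ⟪z, W.toEuclideanLin x⟫ = ⟪Wᵀ.toEuclideanLin z, x⟫ := by
  rw [← conjTranspose_eq_transpose_of_trivial, toEuclideanLin_conjTranspose_eq_adjoint,
    LinearMap.adjoint_inner_left]

theorem stmt6_general {n m : ℕ} (β : ℝ)
    (W : Matrix (Fin n) (Fin m) ℝ)
    (G : EuclideanSpace ℝ (Fin n) → ℝ) (hG : ConvexOn ℝ Set.univ G)
    (C : Set (EuclideanSpace ℝ (Fin n)))
    (hCcv : Convex ℝ C)
    (x₁ x₂ : EuclideanSpace ℝ (Fin m))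
    (z₁ z₂ : EuclideanSpace ℝ (Fin n))
    (hz₁ : z₁ ∈ C ∧ ∀ z ∈ C,
      (1/2) * ‖z₁ - Matrix.toEuclideanLin W x₁‖ ^ 2
          + (β/2) * ‖Matrix.toEuclideanLin Wᵀ z₁ - x₁‖ ^ 2 + G z₁
        ≤ (1/2) * ‖z - Matrix.toEuclideanLin W x₁‖ ^ 2
          + (β/2) * ‖Matrix.toEuclideanLin Wᵀ z - x₁‖ ^ 2 + G z)
    (hz₂ : z₂ ∈ C ∧ ∀ z ∈ C,
      (1/2) * ‖z₂ - Matrix.toEuclideanLin W x₂‖ ^ 2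
          + (β/2) * ‖Matrix.toEuclideanLin Wᵀ z₂ - x₂‖ ^ 2 + G z₂
        ≤ (1/2) * ‖z - Matrix.toEuclideanLin W x₂‖ ^ 2
          + (β/2) * ‖Matrix.toEuclideanLin Wᵀ z - x₂‖ ^ 2 + G z) :
    ‖z₁ - z₂‖ ^ 2 + β * ‖Matrix.toEuclideanLin Wᵀ (z₁ - z₂)‖ ^ 2
      ≤ (1 + β) * ⟪x₁ - x₂, Matrix.toEuclideanLin Wᵀ (z₁ - z₂)⟫ := by
  have hmono := proxObjective_isMinOn_monotone (T := Wᵀ.toEuclideanLin) hG hCcv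
    (isMinOn_iff.2 hz₁.2) hz₁.1 (isMinOn_iff.2 hz₂.2) hz₂.1
  rw [← map_sub, W.inner_toEuclideanLin_transpose] at hmono
  rw [real_inner_comm]
  linarith

/-- (Monotonicity inequality from the proof of Lemma 1.) For `β ≥ 0`,
if `z₁` minimizes `F_{x₁}(z) = (1/2)‖z − Wx₁‖² + (β/2)‖Wᵀz − x₁‖² + G(z)` over the
nonempty closed convex set `C` and `z₂` minimizes `F_{x₂}` over `C`, then
`(1+β)⟨x₁ − x₂, Wᵀ(z₁ − z₂)⟩ ≥ ‖z₁ − z₂‖² + β‖Wᵀ(z₁ − z₂)‖²`. -/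
theorem stmt6 {n m : ℕ} (β : ℝ) (hβ : 0 ≤ β)
    (W : Matrix (Fin n) (Fin m) ℝ)
    (G : EuclideanSpace ℝ (Fin n) → ℝ) (hG : ConvexOn ℝ Set.univ G)
    (C : Set (EuclideanSpace ℝ (Fin n)))
    (hCne : C.Nonempty) (hCcl : IsClosed C) (hCcv : Convex ℝ C)
    (x₁ x₂ : EuclideanSpace ℝ (Fin m))
    (z₁ z₂ : EuclideanSpace ℝ (Fin n))
    (hz₁ : z₁ ∈ C ∧ ∀ z ∈ C,
      (1/2) * ‖z₁ - Matrix.toEuclideanLin W x₁‖ ^ 2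
          + (β/2) * ‖Matrix.toEuclideanLin Wᵀ z₁ - x₁‖ ^ 2 + G z₁
        ≤ (1/2) * ‖z - Matrix.toEuclideanLin W x₁‖ ^ 2
          + (β/2) * ‖Matrix.toEuclideanLin Wᵀ z - x₁‖ ^ 2 + G z)
    (hz₂ : z₂ ∈ C ∧ ∀ z ∈ C,
      (1/2) * ‖z₂ - Matrix.toEuclideanLin W x₂‖ ^ 2
          + (β/2) * ‖Matrix.toEuclideanLin Wᵀ z₂ - x₂‖ ^ 2 + G z₂
        ≤ (1/2) * ‖z - Matrix.toEuclideanLin W x₂‖ ^ 2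
          + (β/2) * ‖Matrix.toEuclideanLin Wᵀ z - x₂‖ ^ 2 + G z) :
    ‖z₁ - z₂‖ ^ 2 + β * ‖Matrix.toEuclideanLin Wᵀ (z₁ - z₂)‖ ^ 2
      ≤ (1 + β) * ⟪x₁ - x₂, Matrix.toEuclideanLin Wᵀ (z₁ - z₂)⟫ :=
  stmt6_general β W G hG C hCcv x₁ x₂ z₁ z₂ hz₁ hz₂
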